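/- For every simplicial set Y, every edge of G(Y) is invertible as an edge of G(Y); that is, for every edge u : Δ[1] → G(Y) there exists v : bΔ[1] → G(Y) with v ∘ δ = u. -/

import Mathlib

open CategoryTheory Simplicial CategoryTheory.Limits Opposite

namespace IndexedPaper
/-- The chaotic preorder on two objects. -/
inductive TwoObj : Type where
  | zero
  | one

instance : Preorder TwoObj where
  le _ _ := True
  le_refl _ := trivial
  le_trans _ _ _ _ _ := trivial

/-- `bΔ[1]`, the nerve of the groupoid with two objects and exactly one morphism
between every ordered pair of objects. -/
def bDelta1 : SSet := CategoryTheory.nerve TwoObj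

/-- `δ : Δ[1] ⟶ bΔ[1]`, classifying the morphism from the first object to the second. -/
noncomputable def deltaB : Δ[1] ⟶ bDelta1 :=
  (SSet.yonedaEquiv (X := bDelta1) (n := ⦋1⦌)).symm
    (CategoryTheory.ComposableArrows.mk₁ (homOfLE trivial : TwoObj.zero ⟶ TwoObj.one))

/-- An edge `x : Δ[1] ⟶ X` is invertible if it extends along `δ` to `bΔ[1]`. -/
def IsInvertibleEdge {X : SSet} (x : Δ[1] ⟶ X) : Prop :=
  ∃ y : bDelta1 ⟶ X, deltaB ≫ y = x

/-- A Kan complex: every horn (`n ≥ 1`, `0 ≤ k ≤ n`) has a filler. -/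
def IsKanComplex (K : SSet) : Prop :=
  ∀ ⦃n : ℕ⦄, 1 ≤ n → ∀ (k : Fin (n + 1)) (f : (Λ[n, k] : SSet) ⟶ K),
    ∃ g : Δ[n] ⟶ K, Λ[n, k].ι ≫ g = f

/-- A Kan fibration: right lifting property with respect to all horn inclusions
(`n ≥ 1`, `0 ≤ k ≤ n`). -/
def IsKanFibration {X Y : SSet} (p : X ⟶ Y) : Prop :=
  ∀ ⦃n : ℕ⦄, 1 ≤ n → ∀ (k : Fin (n + 1)), HasLiftingProperty Λ[n, k].ι p

/-! ### Yoneda naturality lemmas -/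

lemma yE_comp {X Y : SSet} (f : X ⟶ Y) {n : SimplexCategory}
    (g : SSet.stdSimplex.obj n ⟶ X) :
    SSet.yonedaEquiv (X := Y) (n := n) (g ≫ f) = f.app (op n) (SSet.yonedaEquiv (X := X) (n := n) g) := rfl

lemma yE_symm_comp {X Y : SSet} (f : X ⟶ Y) {n : SimplexCategory} (x : X.obj (op n)) :
    (SSet.yonedaEquiv (X := Y) (n := n)).symm (f.app (op n) x) = (SSet.yonedaEquiv (X := X) (n := n)).symm x ≫ f := by
  apply (SSet.yonedaEquiv (X := Y) (n := n)).injective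
  rw [Equiv.apply_symm_apply, yE_comp, Equiv.apply_symm_apply]

lemma yE_symm_map {X : SSet} {m n : SimplexCategory} (f : m ⟶ n) (x : X.obj (op n)) :
    (SSet.yonedaEquiv (X := X) (n := m)).symm (X.map f.op x) =
      SSet.stdSimplex.map f ≫ (SSet.yonedaEquiv (X := X) (n := n)).symm x := by
  exact uliftYonedaEquiv_symm_map f.op x

/-! ### The functor `G` -/

/-- The set of simplices of `X` all of whose edges are invertible. -/
def GSet (X : SSet) (n : SimplexCategoryᵒᵖ) : Set (X.obj n) :=
  {x | ∀ e : Δ[1] ⟶ SSet.stdSimplex.obj n.unop,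
    IsInvertibleEdge (e ≫ (SSet.yonedaEquiv (X := X) (n := n.unop)).symm x)}

/-- `G X`, the simplicial subset of `X` consisting of the simplices all of whose
edges are invertible. -/
def GObj (X : SSet) : SSet where
  obj n := GSet X n
  map := fun {n m} f => TypeCat.ofHom fun x => ⟨X.map f x.1, by
    intro e
    have h := x.2 (e ≫ SSet.stdSimplex.map f.unop)
    have heq : (SSet.yonedaEquiv (X := X) (n := m.unop)).symm (X.map f x.1) =
        SSet.stdSimplex.map f.unop ≫ (SSet.yonedaEquiv (X := X) (n := n.unop)).symm x.1 :=
      yE_symm_map f.unop x.1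
    rw [heq, ← Category.assoc]
    exact h⟩
  map_id n := by
    ext x
    exact Functor.map_id_apply X n x.1
  map_comp f g := by
    ext x
    exact Functor.map_comp_apply X f g x.1

/-- `ε_X : G X ⟶ X`, the inclusion. -/
def epsilon (X : SSet) : GObj X ⟶ X where
  app n := TypeCat.ofHom fun x => x.1
  naturality _ _ _ := rfl

/-- The functorial action of `G` on a map of simplicial sets. -/
def Gmap {X Y : SSet} (f : X ⟶ Y) : GObj X ⟶ GObj Y where
  app n := TypeCat.ofHom fun x => ⟨f.app n x.1, by
    intro e
    obtain ⟨y, hy⟩ := x.2 e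
    refine ⟨y ≫ f, ?_⟩
    have : (SSet.yonedaEquiv (X := Y) (n := n.unop)).symm (f.app n x.1) =
        (SSet.yonedaEquiv (X := X) (n := n.unop)).symm x.1 ≫ f := yE_symm_comp f x.1
    simp only [this, ← Category.assoc, hy]⟩
  naturality n m g := by
    ext x
    exact Subtype.ext (by exact NatTrans.naturality_apply f g x.1)

/-!
The edge `u ≫ ε` of `Y` is a 1-simplex of `G Y`, hence itself invertible: it extends to some
`y : bΔ[1] ⟶ Y`. Every edge of `bΔ[1]` is invertible and invertibility is preserved by
postcomposition, so `y` sends every simplex of `bΔ[1]` into `G Y`; the resulting factorization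
of `y` through `G Y` extends `u` because `ε` is a monomorphism.
-/

lemma IsInvertibleEdge.comp {X Y : SSet} {x : Δ[1] ⟶ X} (hx : IsInvertibleEdge x) (f : X ⟶ Y) :
    IsInvertibleEdge (x ≫ f) := by
  obtain ⟨y, rfl⟩ := hx
  exact ⟨y ≫ f, (Category.assoc _ _ _).symm⟩

lemma yonedaEquiv_deltaB :
    SSet.yonedaEquiv (X := bDelta1) (n := ⦋1⦌) deltaB =
      ComposableArrows.mk₁ (homOfLE trivial : TwoObj.zero ⟶ TwoObj.one) :=
  Equiv.apply_symm_apply _ _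

lemma TwoObj.monotone (g : TwoObj → TwoObj) : Monotone g := fun _ _ _ => trivial

/-- The endomorphism of `bΔ[1]` induced by the map `0 ↦ a, 1 ↦ b` extends the edge `a → b`. -/
lemma isInvertibleEdge_bDelta1 (e : Δ[1] ⟶ bDelta1) : IsInvertibleEdge e := by
  set σ : ComposableArrows TwoObj 1 := SSet.yonedaEquiv (X := bDelta1) (n := ⦋1⦌) e
  let g (t : TwoObj) : TwoObj := match t with
    | TwoObj.zero => σ.obj 0
    | TwoObj.one => σ.obj 1
  refine ⟨nerveMap (TwoObj.monotone g).functor, ?_⟩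
  apply (SSet.yonedaEquiv (X := bDelta1) (n := ⦋1⦌)).injective
  refine (yE_comp (Y := bDelta1) _ deltaB).trans ?_
  rw [yonedaEquiv_deltaB]
  exact (nerveMap_app_mk₁ _ _).trans (ComposableArrows.ext₁ rfl rfl (Subsingleton.elim _ _))

lemma isInvertibleEdge_comp_epsilon {Y : SSet} (u : Δ[1] ⟶ GObj Y) :
    IsInvertibleEdge (u ≫ epsilon Y) := by
  have hu := (SSet.yonedaEquiv u).2 (𝟙 _)
  rw [Category.id_comp] at hu
  rwa [← Equiv.symm_apply_apply SSet.yonedaEquiv u, ← yE_symm_comp]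

def liftG {X Y : SSet} (f : X ⟶ Y) (hX : ∀ e : Δ[1] ⟶ X, IsInvertibleEdge e) : X ⟶ GObj Y where
  app n := TypeCat.ofHom fun σ => ⟨f.app n σ, fun e => by
    rw [yE_symm_comp, ← Category.assoc]
    exact (hX _).comp f⟩
  naturality _ _ g := by
    ext σ
    exact Subtype.ext (by exact NatTrans.naturality_apply f g σ)

@[simp]
lemma liftG_comp_epsilon {X Y : SSet} (f : X ⟶ Y) (hX : ∀ e : Δ[1] ⟶ X, IsInvertibleEdge e) :
    liftG f hX ≫ epsilon Y = f :=
  rfl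

instance epsilon_mono (Y : SSet) : Mono (epsilon Y) :=
  (NatTrans.mono_iff_mono_app _).2 fun _ => (mono_iff_injective _).2 Subtype.val_injective

/-- Every edge of `G Y` is invertible as an edge of `G Y`. -/
theorem every_edge_of_G_is_invertible (Y : SSet) (u : Δ[1] ⟶ GObj Y) :
    ∃ v : bDelta1 ⟶ GObj Y, deltaB ≫ v = u := by
  obtain ⟨y, hy⟩ := isInvertibleEdge_comp_epsilon u
  refine ⟨liftG y isInvertibleEdge_bDelta1, ?_⟩
  rw [← cancel_mono (epsilon Y), Category.assoc, liftG_comp_epsilon, hy]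

end IndexedPaper
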